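/- arXiv:2207.14232 — 4 statements merged into one kernel-verified Lean document; each statement's English description precedes it below -/
import Mathlib

section
/- The total discrete internal peridynamic body force vanishes: let ι be a finite index set of Lagrangian material points X : ι → ℝ^d, let each point l carry a volume V_l > 0, a matrix P_l (its first Piola–Kirchhoff stress) and an invertible matrix K_l (its shape tensor), let ω : ℝ → ℝ be any weight function, and let c : ℝ → ℝ be any volume-correction factor depending only on bond length. Define the discrete pairwise bond force F_PD(l, m) = ω(|X_m − X_l|) (P_l K_l⁻¹ + P_m K_m⁻¹)(X_m − X_l) and the corrected volume V_m^{(l)} = c(|X_m − X_l|) V_m. Then Σ_l Σ_m F_PD(l, m) V_m^{(l)} V_l = 0. -/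
open scoped BigOperators

/-- **The total discrete internal peridynamic body force vanishes.**
Given finitely many Lagrangian material points `X l ∈ ℝ^d` with volumes `V l > 0`,
first Piola–Kirchhoff stress matrices `P l`, invertible shape tensors `K l`, an arbitrary
weight function `ω` and an arbitrary volume-correction factor `c` depending only on the
bond length, the discrete pairwise bond forces
`F_PD l m = ω(‖X m − X l‖) • (P l (K l)⁻¹ + P m (K m)⁻¹) (X m − X l)`
with corrected volumes `V m ^ (l) = c(‖X m − X l‖) * V m` sum to zero:
`∑ l, ∑ m, F_PD l m * V m ^ (l) * V l = 0`. -/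
theorem discrete_peridynamic_total_force_zero {d : ℕ} {ι : Type*} [Fintype ι]
    (X : ι → EuclideanSpace ℝ (Fin d))
    (V : ι → ℝ) (hV : ∀ l, 0 < V l)
    (P K : ι → Matrix (Fin d) (Fin d) ℝ)
    (hK : ∀ l, IsUnit (K l))
    (ω c : ℝ → ℝ)
    (F_PD : ι → ι → EuclideanSpace ℝ (Fin d))
    (hF : ∀ l m, F_PD l m =
      ω ‖X m - X l‖ • (fun i => ((P l * (K l)⁻¹ + P m * (K m)⁻¹).mulVec
        (fun j => (X m - X l) j)) i))
    (Vc : ι → ι → ℝ)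
    (hVc : ∀ l m, Vc l m = c ‖X m - X l‖ * V m) :
    ∑ l, ∑ m, (Vc l m * V l) • F_PD l m = 0 := by
  set g : ι → ι → EuclideanSpace ℝ (Fin d) := fun l m => (Vc l m * V l) • F_PD l m with hg
  have hnorm : ∀ l m : ι, ‖X l - X m‖ = ‖X m - X l‖ := fun l m => norm_sub_rev _ _
  have hanti : ∀ l m : ι, g m l = - g l m := by
    intro l m
    have hF' : F_PD m l = - F_PD l m := by
      ext i
      rw [PiLp.neg_apply, hF, hF, hnorm]
      simp only [Pi.smul_apply, smul_eq_mul]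
      have hx : (fun j => (X l - X m) j) = -fun j => (X m - X l) j := by
        funext j; simp [neg_sub]
      rw [hx, Matrix.mulVec_neg]
      rw [add_comm (P m * (K m)⁻¹)]
      simp [Pi.neg_apply, mul_neg]
    have hVc' : Vc m l * V m = Vc l m * V l := by
      rw [hVc, hVc, hnorm]; ring
    rw [hg]
    simp only
    rw [hF', hVc', smul_neg]
  have h3 : (∑ l, ∑ m, g l m) + (∑ l, ∑ m, g l m) = 0 := by
    nth_rewrite 1 [Finset.sum_comm]
    rw [← Finset.sum_add_distrib]
    apply Finset.sum_eq_zero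
    intro m _
    rw [← Finset.sum_add_distrib]
    apply Finset.sum_eq_zero
    intro l _
    rw [hanti l m]
    simp
  have h4 : (2 : ℝ) • (∑ l, ∑ m, g l m) = 0 := by rw [two_smul]; exact h3
  have h5 := (smul_eq_zero.mp h4).resolve_left (by norm_num)
  simpa [hg] using h5
end

section
/- The constitutive correspondence force state balances angular momentum: let ω : ℝ → ℝ and Y : B(0,ε) → ℝ³ be such that ξ ↦ ω(|ξ|) (Y(ξ) ⊗ ξ) is integrable over B(0,ε) ⊆ ℝ³, let K be a symmetric invertible 3×3 matrix, let P be a 3×3 matrix, and set F = [∫_{B(0,ε)} ω(|ξ|) (Y(ξ) ⊗ ξ) dξ] K⁻¹. If P Fᵀ is a symmetric matrix, then ∫_{B(0,ε)} Y(ξ) × (ω(|ξ|) P K⁻¹ ξ) dξ = 0, where × is the cross product in ℝ³. -/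
open MeasureTheory Matrix

attribute [local instance] Matrix.normedAddCommGroup Matrix.normedSpace

/-- The linear map sending a matrix `B` to the vector of antisymmetric parts of `B * Mᵀ`. -/
noncomputable def crossAux (M : Matrix (Fin 3) (Fin 3) ℝ) :
    Matrix (Fin 3) (Fin 3) ℝ →L[ℝ] (Fin 3 → ℝ) :=
  LinearMap.toContinuousLinearMap
  { toFun := fun B => ![(B * Mᵀ) 1 2 - (B * Mᵀ) 2 1,
      (B * Mᵀ) 2 0 - (B * Mᵀ) 0 2, (B * Mᵀ) 0 1 - (B * Mᵀ) 1 0]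
    map_add' := by
      intro B C
      funext i
      fin_cases i <;> simp [Matrix.add_mul] <;> ring
    map_smul' := by
      intro c B
      funext i
      fin_cases i <;> simp [Matrix.smul_mul] <;> ring }

lemma crossAux_apply (M B : Matrix (Fin 3) (Fin 3) ℝ) :
    crossAux M B = ![(B * Mᵀ) 1 2 - (B * Mᵀ) 2 1,
      (B * Mᵀ) 2 0 - (B * Mᵀ) 0 2, (B * Mᵀ) 0 1 - (B * Mᵀ) 1 0] := rfl

/-- **The constitutive correspondence force state balances angular momentum.**
Suppose `ξ ↦ ω(|ξ|) (Y(ξ) ⊗ ξ)` is integrable over `B(0,ε) ⊆ ℝ³`, `K` is a symmetric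
invertible `3 × 3` matrix, `P` a `3 × 3` matrix, and
`F = [∫_{B(0,ε)} ω(|ξ|) (Y(ξ) ⊗ ξ) dξ] K⁻¹`.  If `P Fᵀ` is symmetric, then
`∫_{B(0,ε)} Y(ξ) × (ω(|ξ|) P K⁻¹ ξ) dξ = 0`. -/
theorem correspondence_angular_momentum_balance
    (ω : ℝ → ℝ) (ε : ℝ)
    (Y : EuclideanSpace ℝ (Fin 3) → (Fin 3 → ℝ))
    (hint : @IntegrableOn _ _ _ _ SeminormedAddGroup.toContinuousENorm
      (fun ξ : EuclideanSpace ℝ (Fin 3) =>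
      ω ‖ξ‖ • Matrix.of (fun i j => Y ξ i * ξ j))
      (Metric.ball (0 : EuclideanSpace ℝ (Fin 3)) ε) volume)
    (K : Matrix (Fin 3) (Fin 3) ℝ) (hKsymm : K.IsSymm) (hKunit : IsUnit K)
    (P : Matrix (Fin 3) (Fin 3) ℝ)
    (F : Matrix (Fin 3) (Fin 3) ℝ)
    (hF : F = (∫ ξ in Metric.ball (0 : EuclideanSpace ℝ (Fin 3)) ε,
      ω ‖ξ‖ • Matrix.of (fun i j => Y ξ i * ξ j)) * K⁻¹)
    (hPF : (P * Fᵀ).IsSymm) :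
    (∫ ξ in Metric.ball (0 : EuclideanSpace ℝ (Fin 3)) ε,
      crossProduct (Y ξ) (ω ‖ξ‖ • (P * K⁻¹).mulVec (fun k => ξ k))) = 0 := by
  set M : Matrix (Fin 3) (Fin 3) ℝ := P * K⁻¹ with hM
  set A : Matrix (Fin 3) (Fin 3) ℝ :=
    ∫ ξ in Metric.ball (0 : EuclideanSpace ℝ (Fin 3)) ε,
      ω ‖ξ‖ • Matrix.of (fun i j => Y ξ i * ξ j) with hA
  -- pointwise identity
  have hpt : ∀ ξ : EuclideanSpace ℝ (Fin 3),
      crossProduct (Y ξ) (ω ‖ξ‖ • M.mulVec (fun k => ξ k)) =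
      crossAux M (ω ‖ξ‖ • Matrix.of (fun i j => Y ξ i * ξ j)) := by
    intro ξ
    funext i
    fin_cases i <;>
      simp [crossAux_apply, cross_apply, Matrix.mul_apply, Matrix.mulVec, dotProduct,
        Fin.sum_univ_three, Matrix.smul_apply] <;> ring
  rw [show (fun ξ : EuclideanSpace ℝ (Fin 3) =>
      crossProduct (Y ξ) (ω ‖ξ‖ • M.mulVec (fun k => ξ k))) =
      (fun ξ => crossAux M (ω ‖ξ‖ • Matrix.of (fun i j => Y ξ i * ξ j))) from funext hpt]
  erw [ContinuousLinearMap.integral_comp_comm _ hint]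
  change crossAux M A = 0
  -- now show crossAux M A = 0 using symmetry of A * Mᵀ
  have hKinv : K⁻¹ᵀ = K⁻¹ := by
    rw [Matrix.transpose_nonsing_inv, hKsymm]
  have hS : A * Mᵀ = F * Pᵀ := by
    rw [hM, Matrix.transpose_mul, hKinv, hF, Matrix.mul_assoc]
  have hSymm : (A * Mᵀ).IsSymm := by
    rw [hS]
    have : (P * Fᵀ)ᵀ = P * Fᵀ := hPF
    rw [Matrix.transpose_mul, Matrix.transpose_transpose] at this
    unfold Matrix.IsSymm
    rw [Matrix.transpose_mul, Matrix.transpose_transpose, this]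
  have he : ∀ i j, (A * Mᵀ) i j = (A * Mᵀ) j i := fun i j => by
    conv_lhs => rw [← hSymm]
    rfl
  funext i
  fin_cases i <;>
    simp only [crossAux_apply, Matrix.cons_val_zero, Matrix.cons_val_one, Matrix.head_cons,
      Matrix.cons_val_two, Matrix.tail_cons, he 1 2, he 2 0, he 0 1, sub_self, Pi.zero_apply] <;> rfl
end

section
/- First Piola–Kirchhoff stress of the modified Mooney–Rivlin model: let c₁, c₂ > 0 and κ ≥ 0, and define on 3×3 real matrices the strain energy Ψ(F) = c₁(J^{−2/3} I₁ − 3) + c₂((J^{−4/3}/2) I₂ − 3) + (κ/2)(ln J)², where J = det F, C = FᵀF, I₁ = tr(C), and I₂ = tr(C)² − tr(C²). Then at every F with det F > 0, Ψ is Fréchet differentiable and its derivative is the linear map H ↦ tr(Pᵀ H), where P = 2c₁ J^{−2/3}(F − (I₁/3) F^{−T}) + 2c₂ J^{−4/3}(I₁ F − F C − (I₂/3) F^{−T}) + κ (ln J) F^{−T}. -/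
open Matrix Real

attribute [local instance] Matrix.normedAddCommGroup Matrix.normedSpace

noncomputable section
abbrev M3 := Matrix (Fin 3) (Fin 3) ℝ

def eC (i j : Fin 3) : M3 →L[ℝ] ℝ := LinearMap.toContinuousLinearMap (Matrix.entryLinearMap ℝ ℝ i j)

def Ldet (F : M3) : M3 →L[ℝ] ℝ :=
  LinearMap.toContinuousLinearMap
    ((Matrix.traceLinearMap (Fin 3) ℝ ℝ).comp (LinearMap.mulLeft ℝ (F.adjugate)))

lemma Ldet_apply (F H : M3) : Ldet F H = (F.adjugate * H).trace := rfl

lemma hasFDerivAt_det3 (F : M3) : HasFDerivAt (fun A : M3 => A.det) (Ldet F) F := by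
  have h : ∀ i j : Fin 3, HasFDerivAt (fun A : M3 => A i j) (eC i j) F := fun i j =>
    (eC i j).hasFDerivAt
  have H1 := ((((h 0 0).mul (((h 1 1).mul (h 2 2)).sub ((h 1 2).mul (h 2 1)))).sub
      ((h 0 1).mul (((h 1 0).mul (h 2 2)).sub ((h 1 2).mul (h 2 0))))).add
      ((h 0 2).mul (((h 1 0).mul (h 2 1)).sub ((h 1 1).mul (h 2 0)))))
  have hfun : (fun A : M3 => A.det) = (fun A : M3 =>
      A 0 0 * (A 1 1 * A 2 2 - A 1 2 * A 2 1) - A 0 1 * (A 1 0 * A 2 2 - A 1 2 * A 2 0)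
        + A 0 2 * (A 1 0 * A 2 1 - A 1 1 * A 2 0)) := funext fun A => by
    rw [Matrix.det_fin_three]; ring
  rw [hfun]
  refine H1.congr_fderiv ?_
  apply ContinuousLinearMap.ext
  intro H
  show F 0 0 * (F 1 1 * H 2 2 + F 2 2 * H 1 1 - (F 1 2 * H 2 1 + F 2 1 * H 1 2)) + (F 1 1 * F 2 2 - F 1 2 * F 2 1) * H 0 0 - (F 0 1 * (F 1 0 * H 2 2 + F 2 2 * H 1 0 - (F 1 2 * H 2 0 + F 2 0 * H 1 2)) + (F 1 0 * F 2 2 - F 1 2 * F 2 0) * H 0 1) + (F 0 2 * (F 1 0 * H 2 1 + F 2 1 * H 1 0 - (F 1 1 * H 2 0 + F 2 0 * H 1 1)) + (F 1 0 * F 2 1 - F 1 1 * F 2 0) * H 0 2) = (F.adjugate * H).trace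
  simp [Ldet, eC, Matrix.adjugate_fin_three, Matrix.trace_fin_three, Matrix.mul_apply,
    Fin.sum_univ_three, LinearMap.mulLeft_apply, Matrix.vecMul, dotProduct]
  ring

lemma hg_bb : IsBoundedBilinearMap ℝ (fun p : M3 × M3 => ((p.1)ᵀ * p.2).trace) := by
  constructor
  · intro x₁ x₂ y; simp [Matrix.transpose_add, Matrix.add_mul, Matrix.trace_add]
  · intro c x y; simp [Matrix.transpose_smul, Matrix.smul_mul, Matrix.trace_smul]
  · intro x y₁ y₂; simp [Matrix.mul_add, Matrix.trace_add]
  · intro c x y; simp [Matrix.mul_smul, Matrix.trace_smul]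
  · refine ⟨9, by norm_num, fun X Y => ?_⟩
    have h : ∀ i j : Fin 3, |X i j * Y i j| ≤ ‖X‖ * ‖Y‖ := by
      intro i j
      rw [abs_mul]
      exact mul_le_mul (X.norm_entry_le_entrywise_sup_norm) (Y.norm_entry_le_entrywise_sup_norm)
        (abs_nonneg _) (norm_nonneg _)
    calc ‖((Xᵀ * Y).trace : ℝ)‖ = |∑ i : Fin 3, ∑ j : Fin 3, X j i * Y j i| := by
          simp [Matrix.trace, Matrix.diag, Matrix.mul_apply, Matrix.transpose_apply]
      _ ≤ ∑ i : Fin 3, ∑ j : Fin 3, |X j i * Y j i| := by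
          refine (Finset.abs_sum_le_sum_abs _ _).trans ?_
          exact Finset.sum_le_sum fun i _ => Finset.abs_sum_le_sum_abs _ _
      _ ≤ ∑ _i : Fin 3, ∑ _j : Fin 3, ‖X‖ * ‖Y‖ :=
          Finset.sum_le_sum fun i _ => Finset.sum_le_sum fun j _ => h j i
      _ = 9 * ‖X‖ * ‖Y‖ := by simp [Fin.sum_univ_three]; ring

lemma hm_bb : IsBoundedBilinearMap ℝ (fun p : M3 × M3 => p.1 * (p.2)ᵀ) := by
  constructor
  · intro x₁ x₂ y; simp [Matrix.add_mul]
  · intro c x y; simp [Matrix.smul_mul]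
  · intro x y₁ y₂; simp [Matrix.transpose_add, Matrix.mul_add]
  · intro c x y; simp [Matrix.transpose_smul, Matrix.mul_smul]
  · refine ⟨3, by norm_num, fun X Y => ?_⟩
    rw [Matrix.norm_le_iff (by positivity)]
    intro i j
    calc ‖(X * Yᵀ) i j‖ = |∑ k : Fin 3, X i k * Y j k| := by
          simp [Matrix.mul_apply, Matrix.transpose_apply]
      _ ≤ ∑ k : Fin 3, |X i k * Y j k| := Finset.abs_sum_le_sum_abs _ _
      _ ≤ ∑ _k : Fin 3, ‖X‖ * ‖Y‖ := Finset.sum_le_sum fun k _ => by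
          rw [abs_mul]
          exact mul_le_mul (X.norm_entry_le_entrywise_sup_norm)
            (Y.norm_entry_le_entrywise_sup_norm) (abs_nonneg _) (norm_nonneg _)
      _ = 3 * ‖X‖ * ‖Y‖ := by simp [Fin.sum_univ_three]; ring


/-- **First Piola–Kirchhoff stress of the modified Mooney–Rivlin model.**
For `c₁, c₂ > 0`, `κ ≥ 0` and the strain energy
`Ψ(F) = c₁(J^{−2/3} I₁ − 3) + c₂((J^{−4/3}/2) I₂ − 3) + (κ/2)(ln J)²` with `J = det F`,
`C = FᵀF`, `I₁ = tr C`, `I₂ = (tr C)² − tr(C²)`, at every `F` with `det F > 0` the energy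
`Ψ` is Fréchet differentiable with derivative `H ↦ tr(Pᵀ H)`, where
`P = 2c₁ J^{−2/3}(F − (I₁/3) F^{−T}) + 2c₂ J^{−4/3}(I₁ F − F C − (I₂/3) F^{−T})
    + κ (ln J) F^{−T}`. -/
theorem mooney_rivlin_first_piola_kirchhoff
    (c₁ c₂ κ : ℝ) (hc₁ : 0 < c₁) (hc₂ : 0 < c₂) (hκ : 0 ≤ κ)
    (Ψ : Matrix (Fin 3) (Fin 3) ℝ → ℝ)
    (hΨ : ∀ A : Matrix (Fin 3) (Fin 3) ℝ,
      Ψ A = c₁ * (A.det ^ (-(2 : ℝ) / 3) * (Aᵀ * A).trace - 3)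
        + c₂ * (A.det ^ (-(4 : ℝ) / 3) / 2 *
            ((Aᵀ * A).trace ^ 2 - ((Aᵀ * A) * (Aᵀ * A)).trace) - 3)
        + κ / 2 * (Real.log A.det) ^ 2)
    (F : Matrix (Fin 3) (Fin 3) ℝ) (hF : 0 < F.det)
    (P : Matrix (Fin 3) (Fin 3) ℝ)
    (hP : P = (2 * c₁ * F.det ^ (-(2 : ℝ) / 3)) •
          (F - ((Fᵀ * F).trace / 3) • F⁻¹ᵀ)
        + (2 * c₂ * F.det ^ (-(4 : ℝ) / 3)) •
          ((Fᵀ * F).trace • F - F * (Fᵀ * F)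
            - (((Fᵀ * F).trace ^ 2 - ((Fᵀ * F) * (Fᵀ * F)).trace) / 3) • F⁻¹ᵀ)
        + (κ * Real.log F.det) • F⁻¹ᵀ)
    (L : Matrix (Fin 3) (Fin 3) ℝ →L[ℝ] ℝ)
    (hL : ∀ H : Matrix (Fin 3) (Fin 3) ℝ, L H = (Pᵀ * H).trace) :
    HasFDerivAt Ψ L F := by
  have hdet := hasFDerivAt_det3 F
  have hdiag : HasFDerivAt (fun A : M3 => (A, A))
      ((ContinuousLinearMap.id ℝ M3).prod (ContinuousLinearMap.id ℝ M3)) F :=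
    (hasFDerivAt_id F).prodMk (hasFDerivAt_id F)
  have hI1raw := HasFDerivAt.comp (f := fun A : M3 => (A, A)) F (hg_bb.hasFDerivAt (F, F)) hdiag
  have hI1 : HasFDerivAt (fun A : M3 => (Aᵀ * A).trace)
      ((hg_bb.deriv (F, F)).comp
        ((ContinuousLinearMap.id ℝ M3).prod (ContinuousLinearMap.id ℝ M3))) F := hI1raw
  have hmmraw := HasFDerivAt.comp (f := fun A : M3 => (A, A)) F (hm_bb.hasFDerivAt (F, F)) hdiag
  have hmm : HasFDerivAt (fun A : M3 => A * Aᵀ)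
      ((hm_bb.deriv (F, F)).comp
        ((ContinuousLinearMap.id ℝ M3).prod (ContinuousLinearMap.id ℝ M3))) F := hmmraw
  have hQraw := HasFDerivAt.comp (f := fun A : M3 => (A * Aᵀ, A * Aᵀ)) F (hg_bb.hasFDerivAt (F * Fᵀ, F * Fᵀ)) (hmm.prodMk hmm)
  have hQ : HasFDerivAt (fun A : M3 => ((Aᵀ * A) * (Aᵀ * A)).trace)
      ((hg_bb.deriv (F * Fᵀ, F * Fᵀ)).comp
        ((((hm_bb.deriv (F, F)).comp
            ((ContinuousLinearMap.id ℝ M3).prod (ContinuousLinearMap.id ℝ M3)))).prod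
          (((hm_bb.deriv (F, F)).comp
            ((ContinuousLinearMap.id ℝ M3).prod (ContinuousLinearMap.id ℝ M3)))))) F := by
    refine hQraw.congr_of_eventuallyEq (Filter.Eventually.of_forall fun A => ?_)
    show ((Aᵀ * A) * (Aᵀ * A)).trace = ((A * Aᵀ)ᵀ * (A * Aᵀ)).trace
    rw [Matrix.transpose_mul, Matrix.transpose_transpose, ← Matrix.mul_assoc,
      Matrix.trace_mul_comm, Matrix.mul_assoc, ← Matrix.mul_assoc]
  have hJp1 : HasFDerivAt (fun A : M3 => A.det ^ (-(2:ℝ)/3))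
      ((-(2:ℝ)/3 * F.det ^ (-(2:ℝ)/3 - 1)) • Ldet F) F :=
    (Real.hasDerivAt_rpow_const (p := -(2:ℝ)/3) (Or.inl hF.ne')).comp_hasFDerivAt F hdet
  have hJp2 : HasFDerivAt (fun A : M3 => A.det ^ (-(4:ℝ)/3))
      ((-(4:ℝ)/3 * F.det ^ (-(4:ℝ)/3 - 1)) • Ldet F) F :=
    (Real.hasDerivAt_rpow_const (p := -(4:ℝ)/3) (Or.inl hF.ne')).comp_hasFDerivAt F hdet
  have hlog : HasFDerivAt (fun A : M3 => Real.log A.det) ((F.det)⁻¹ • Ldet F) F :=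
    (Real.hasDerivAt_log hF.ne').comp_hasFDerivAt F hdet
  have ht1 := ((hJp1.mul hI1).sub_const 3).const_mul c₁
  have ht2 := (((hJp2.const_mul ((1:ℝ)/2)).mul ((hI1.mul hI1).sub hQ)).sub_const 3).const_mul c₂
  have ht3 := (hlog.mul hlog).const_mul (κ/2)
  have hbig := (ht1.add ht2).add ht3
  have hfinal := hbig.congr_of_eventuallyEq
    (Filter.Eventually.of_forall (fun A => by rw [hΨ A]; ring) :
      Ψ =ᶠ[nhds F] fun A : M3 =>
        c₁ * (A.det ^ (-(2:ℝ)/3) * (Aᵀ * A).trace - 3)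
        + c₂ * (1/2 * A.det ^ (-(4:ℝ)/3) *
            ((Aᵀ * A).trace * (Aᵀ * A).trace - ((Aᵀ * A) * (Aᵀ * A)).trace) - 3)
        + κ/2 * (Real.log A.det * Real.log A.det))
  refine hfinal.congr_fderiv ?_
  ext H
  show c₁ * (F.det ^ (-(2:ℝ)/3) * ((Fᵀ * H).trace + (Hᵀ * F).trace) + (Fᵀ * F).trace * ((-(2:ℝ)/3 * F.det ^ (-(2:ℝ)/3 - 1)) * (F.adjugate * H).trace))
    + c₂ * ((1/2 * F.det ^ (-(4:ℝ)/3)) * ((Fᵀ * F).trace * ((Fᵀ * H).trace + (Hᵀ * F).trace) + (Fᵀ * F).trace * ((Fᵀ * H).trace + (Hᵀ * F).trace) - (((F * Fᵀ)ᵀ * (F * Hᵀ + H * Fᵀ)).trace + ((F * Hᵀ + H * Fᵀ)ᵀ * (F * Fᵀ)).trace)) + ((Fᵀ * F).trace * (Fᵀ * F).trace - (Fᵀ * F * (Fᵀ * F)).trace) * (1/2 * ((-(4:ℝ)/3 * F.det ^ (-(4:ℝ)/3 - 1)) * (F.adjugate * H).trace)))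
    + κ/2 * (Real.log F.det * (F.det⁻¹ * (F.adjugate * H).trace) + Real.log F.det * (F.det⁻¹ * (F.adjugate * H).trace)) = L H
  rw [hL, hP]
  simp only [ContinuousLinearMap.add_apply, ContinuousLinearMap.coe_smul', Pi.smul_apply,
    ContinuousLinearMap.coe_sub', Pi.sub_apply, ContinuousLinearMap.comp_apply,
    ContinuousLinearMap.prod_apply, ContinuousLinearMap.coe_id', id_eq,
    IsBoundedBilinearMap.deriv_apply, smul_eq_mul, Ldet_apply,
    Matrix.transpose_add, Matrix.transpose_sub, Matrix.transpose_smul, Matrix.transpose_mul,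
    Matrix.transpose_transpose, Matrix.add_mul, Matrix.sub_mul, Matrix.smul_mul,
    Matrix.mul_add, Matrix.trace_add, Matrix.trace_sub, Matrix.trace_smul]
  have n1 : (Hᵀ * F).trace = (Fᵀ * H).trace := by
    rw [← Matrix.trace_transpose (Hᵀ * F), Matrix.transpose_mul, Matrix.transpose_transpose]
  have nadj : F.adjugate = F.det • F⁻¹ := by
    rw [Matrix.inv_def, smul_smul, Ring.inverse_eq_inv, mul_inv_cancel₀ hF.ne', one_smul]
  have n2 : (F.adjugate * H).trace = F.det * (F⁻¹ * H).trace := by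
    rw [nadj, Matrix.smul_mul, Matrix.trace_smul, smul_eq_mul]
  have n3 : (F * Fᵀ * (F * Hᵀ)).trace = (Fᵀ * F * Fᵀ * H).trace := by
    simp [Matrix.trace, Matrix.diag, Matrix.mul_apply, Matrix.transpose_apply,
      Fin.sum_univ_three]; ring
  have n4 : (F * Fᵀ * (H * Fᵀ)).trace = (Fᵀ * F * Fᵀ * H).trace := by
    simp [Matrix.trace, Matrix.diag, Matrix.mul_apply, Matrix.transpose_apply,
      Fin.sum_univ_three]; ring
  have n5 : (H * Fᵀ * (F * Fᵀ)).trace = (Fᵀ * F * Fᵀ * H).trace := by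
    simp [Matrix.trace, Matrix.diag, Matrix.mul_apply, Matrix.transpose_apply,
      Fin.sum_univ_three]; ring
  have n6 : (F * Hᵀ * (F * Fᵀ)).trace = (Fᵀ * F * Fᵀ * H).trace := by
    simp [Matrix.trace, Matrix.diag, Matrix.mul_apply, Matrix.transpose_apply,
      Fin.sum_univ_three]; ring
  rw [n1, n2, n3, n4, n5, n6]
  simp only [Real.rpow_sub_one hF.ne']
  field_simp
  ring
end
end

section
/- Jacobi–Liouville formula along a matrix flow: let A, B : ℝ → Matrix (Fin n) (Fin n) ℝ with A differentiable and satisfying A'(t) = B(t) · A(t) for all t. Then the function t ↦ det(A(t)) is differentiable with derivative (det ∘ A)'(t) = tr(B(t)) · det(A(t)) for all t. -/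
open Matrix

attribute [local instance] Matrix.normedAddCommGroup Matrix.normedSpace

/-- The determinant as a continuous multilinear map in the rows. -/
noncomputable def detCM (n : ℕ) :
    ContinuousMultilinearMap ℝ (fun _ : Fin n => (Fin n → ℝ)) ℝ :=
  MultilinearMap.mkContinuous
    (Matrix.detRowAlternating : ((Fin n → ℝ) [⋀^Fin n]→ₗ[ℝ] ℝ)).toMultilinearMap
    (n.factorial) (by
      intro m
      rw [AlternatingMap.coe_multilinearMap, Matrix.detRowAlternating]
      show |Matrix.det (Matrix.of m)| ≤ _
      rw [Matrix.det_apply]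
      calc |∑ σ : Equiv.Perm (Fin n), Equiv.Perm.sign σ • ∏ i, Matrix.of m (σ i) i|
          ≤ ∑ σ : Equiv.Perm (Fin n), |Equiv.Perm.sign σ • ∏ i, Matrix.of m (σ i) i| :=
            Finset.abs_sum_le_sum_abs _ _
        _ ≤ ∑ _σ : Equiv.Perm (Fin n), ∏ i, ‖m i‖ := by
            apply Finset.sum_le_sum
            intro σ _
            have h1 : |((Equiv.Perm.sign σ : ℤ) : ℝ)| = 1 := by
              rcases Int.units_eq_one_or (Equiv.Perm.sign σ) with h | h <;> simp [h]
            rw [Units.smul_def, zsmul_eq_mul, abs_mul, h1, one_mul, Finset.abs_prod]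
            have : (∏ i, |Matrix.of m (σ i) i|) ≤ ∏ i, ‖m (σ i)‖ := by
              apply Finset.prod_le_prod (fun i _ => abs_nonneg _)
              intro i _
              exact norm_le_pi_norm (m (σ i)) i
            refine this.trans (le_of_eq ?_)
            exact Equiv.prod_comp σ (fun i => ‖m i‖)
        _ = (n.factorial : ℝ) * ∏ i, ‖m i‖ := by
            rw [Finset.sum_const, nsmul_eq_mul]
            congr 1
            simp [Fintype.card_perm])

lemma detCM_apply {n : ℕ} (M : Matrix (Fin n) (Fin n) ℝ) :
    detCM n (fun i => M i) = M.det := rfl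

/-- **Jacobi–Liouville formula along a matrix flow.**
If `A, B : ℝ → Matrix (Fin n) (Fin n) ℝ` with `A` differentiable and
`A'(t) = B(t) · A(t)` for all `t`, then `t ↦ det (A t)` is differentiable with
`(det ∘ A)'(t) = tr (B t) · det (A t)` for all `t`. -/
theorem jacobi_liouville_det_flow {n : ℕ}
    (A B : ℝ → Matrix (Fin n) (Fin n) ℝ)
    (hA : Differentiable ℝ A)
    (hA' : ∀ t : ℝ, deriv A t = B t * A t) :
    Differentiable ℝ (fun t => (A t).det) ∧
      ∀ t : ℝ, deriv (fun t => (A t).det) t = (B t).trace * (A t).det := by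
  have key : ∀ t : ℝ, HasDerivAt (fun t => (A t).det)
      ((B t).trace * (A t).det) t := by
    intro t
    have hAd : HasDerivAt A (B t * A t) t := by
      rw [← hA' t]; exact (hA t).hasDerivAt
    have h1 : HasFDerivAt (detCM n) ((detCM n).linearDeriv (fun i => A t i))
        (fun i => A t i) := (detCM n).hasFDerivAt _
    have h2 : HasDerivAt (fun s => detCM n (fun i => A s i))
        ((detCM n).linearDeriv (fun i => A t i) (fun i => (B t * A t) i)) t :=
      h1.comp_hasDerivAt t hAd
    have h3 : (detCM n).linearDeriv (fun i => A t i) (fun i => (B t * A t) i)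
        = (B t).trace * (A t).det := by
      rw [ContinuousMultilinearMap.linearDeriv_apply]
      have hrow : ∀ i : Fin n, (B t * A t) i = ∑ k, (B t i k) • (A t k) := by
        intro i
        funext j
        simp [Matrix.mul_apply, Finset.sum_apply]
      have hupd : ∀ i : Fin n,
          detCM n (Function.update (fun i => A t i) i ((B t * A t) i))
            = B t i i * (A t).det := by
        intro i
        have : Function.update (fun j => A t j) i ((B t * A t) i)
            = fun j => ((A t).updateRow i (∑ k, (B t i k) • (A t k))) j := by
          funext j
          by_cases hji : j = i
          · subst hji; rw [Function.update_self, Matrix.updateRow_self, hrow]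
          · rw [Function.update_of_ne hji, Matrix.updateRow_ne hji]
        rw [this, detCM_apply, Matrix.det_updateRow_sum]
        simp [smul_eq_mul]
      rw [Finset.sum_congr rfl (fun i _ => hupd i)]
      rw [Matrix.trace, ← Finset.sum_mul]
      rfl
    rw [← h3]
    exact h2
  exact ⟨fun t => (key t).differentiableAt, fun t => (key t).deriv⟩
end
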